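/- arXiv:2411.19826 — 2 statements merged into one kernel-verified Lean document; each statement's English description precedes it below -/
import Mathlib

section
/- Let K be a planar convex body and let a < b ≤ a + 2π be real numbers. Then for every x ∈ (a, b], v_K^+(x) − v_K^+(a) = ∫_{t ∈ (a, x]} v_t dσ_K(t), where σ_K is regarded as a Borel measure on the interval (a, a+2π] via the canonical identification with the circle ℝ/2πℤ, and v_K^+ is 2π-periodic. -/
noncomputable section

open Real MeasureTheory Set Filter Topology

abbrev Pt := EuclideanSpace ℝ (Fin 2)

def mk2 (x y : ℝ) : Pt := (WithLp.equiv 2 (Fin 2 → ℝ)).symm ![x, y]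

def dotp (p q : Pt) : ℝ := p 0 * q 0 + p 1 * q 1

def uvec (t : ℝ) : Pt := mk2 (Real.cos t) (Real.sin t)

def vvec (t : ℝ) : Pt := mk2 (-Real.sin t) (Real.cos t)

def suppFn (K : Set Pt) (t : ℝ) : ℝ := sSup ((fun p => dotp p (uvec t)) '' K)

def suppLine (K : Set Pt) (t : ℝ) : Set Pt := {p | dotp p (uvec t) = suppFn K t}

def edge (K : Set Pt) (t : ℝ) : Set Pt := K ∩ suppLine K t

def vplus (K : Set Pt) (t : ℝ) : Pt :=
  suppFn K t • uvec t + sSup ((fun p => dotp p (vvec t)) '' edge K t) • vvec t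

def vminus (K : Set Pt) (t : ℝ) : Pt :=
  suppFn K t • uvec t + sInf ((fun p => dotp p (vvec t)) '' edge K t) • vvec t

def vinter (K : Set Pt) (a b : ℝ) : Pt :=
  mk2 ((suppFn K a * Real.sin b - suppFn K b * Real.sin a) / Real.sin (b - a))
      ((suppFn K b * Real.cos a - suppFn K a * Real.cos b) / Real.sin (b - a))

def IsConvexBody (K : Set Pt) : Prop := K.Nonempty ∧ IsCompact K ∧ Convex ℝ K

def Jset (ω : ℝ) : Set ℝ := Icc 0 ω ∪ Icc (π/2) (ω + π/2)

def IsCap (ω : ℝ) (K : Set Pt) : Prop :=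
  IsConvexBody K ∧
  suppFn K ω = 1 ∧ suppFn K (π/2) = 1 ∧
  suppFn K (ω + π) = 0 ∧ suppFn K (3*π/2) = 0 ∧
  K = ⋂ t ∈ Jset ω ∪ {ω + π, 3*π/2}, {p : Pt | dotp p (uvec t) ≤ suppFn K t}

def polyAngles (ω : ℝ) (Θ : Finset ℝ) : Set ℝ :=
  ↑Θ ∪ (fun s => s + π/2) '' ↑Θ ∪ {ω, π/2, ω + π, 3*π/2}

def IsPolyCap (ω : ℝ) (Θ : Finset ℝ) (K : Set Pt) : Prop :=
  IsCap ω K ∧ K = ⋂ t ∈ polyAngles ω Θ, {p : Pt | dotp p (uvec t) ≤ suppFn K t}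

def Qminus (K : Set Pt) (t : ℝ) : Set Pt :=
  {p | dotp p (uvec t) < suppFn K t - 1 ∧ dotp p (uvec (t + π/2)) < suppFn K (t + π/2) - 1}

def Qplus (K : Set Pt) (t : ℝ) : Set Pt :=
  {p | dotp p (uvec t) ≤ suppFn K t ∧ dotp p (uvec (t + π/2)) ≤ suppFn K (t + π/2)}

def hallway (S : Set Pt) (t : ℝ) : Set Pt := Qplus S t \ Qminus S t

def fan (ω : ℝ) : Set Pt := {p | 0 ≤ dotp p (uvec ω) ∧ 0 ≤ dotp p (uvec (π/2))}

def parall (ω : ℝ) : Set Pt :=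
  {p | dotp p (uvec (π/2)) ∈ Icc (0:ℝ) 1 ∧ dotp p (uvec ω) ∈ Icc (0:ℝ) 1}

def innerCorner (K : Set Pt) (t : ℝ) : Pt :=
  (suppFn K t - 1) • uvec t + (suppFn K (t + π/2) - 1) • vvec t

def outerCorner (K : Set Pt) (t : ℝ) : Pt :=
  suppFn K t • uvec t + suppFn K (t + π/2) • vvec t

def wedge (ω : ℝ) (K : Set Pt) (t : ℝ) : Set Pt := fan ω ∩ Qminus K t

def niche (ω : ℝ) (K : Set Pt) : Set Pt := fan ω ∩ ⋃ t ∈ Ioo 0 ω, Qminus K t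

def polyNiche (ω : ℝ) (Θ : Finset ℝ) (K : Set Pt) : Set Pt :=
  parall ω ∩ ⋃ t ∈ Θ, Qminus K t

def upperBoundary (ω : ℝ) (K : Set Pt) : Set Pt := ⋃ t ∈ Icc 0 (ω + π/2), edge K t

def area (X : Set Pt) : ℝ := (volume X).toReal

def Wpt (K : Set Pt) (t : ℝ) : Pt := mk2 ((suppFn K t - 1) / Real.cos t) 0

def Zpt (ω : ℝ) (K : Set Pt) (t : ℝ) : Pt :=
  ((suppFn K (t + π/2) - 1) / Real.sin (t + π/2 - ω)) • vvec ω

def wgap (K : Set Pt) (t : ℝ) : ℝ := dotp (vminus K 0 - Wpt K t) (uvec 0)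

def zgap (ω : ℝ) (K : Set Pt) (t : ℝ) : ℝ := dotp (vplus K (ω + π/2) - Zpt ω K t) (vvec ω)

def wgapInf (ω : ℝ) (K : Set Pt) : ℝ := sInf (wgap K '' Ioo 0 ω)

def zgapInf (ω : ℝ) (K : Set Pt) : ℝ := sInf (zgap ω K '' Ioo 0 ω)

def fplus (K : Set Pt) (t : ℝ) : ℝ := dotp (outerCorner K t - vplus K t) (vvec t)
def fminus (K : Set Pt) (t : ℝ) : ℝ := dotp (outerCorner K t - vminus K t) (vvec t)
def gplus (K : Set Pt) (t : ℝ) : ℝ := dotp (outerCorner K t - vplus K (t + π/2)) (uvec t)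
def gminus (K : Set Pt) (t : ℝ) : ℝ := dotp (outerCorner K t - vminus K (t + π/2)) (uvec t)

def oPt (ω : ℝ) : Pt := mk2 (Real.tan (π/4 - ω/2)) 1

def hplane (c : Bool) (t h : ℝ) : Set Pt :=
  if c then {p | dotp p (uvec t) ≤ h} else {p | dotp p (uvec t) < h}

-- ALGEBRA KIT
lemma dotp_sub_left (p q r : Pt) : dotp (p - q) r = dotp p r - dotp q r := by
  simp [dotp]; ring
lemma dotp_add_left (p q r : Pt) : dotp (p + q) r = dotp p r + dotp q r := by
  simp [dotp]; ring
lemma dotp_smul_left (c : ℝ) (p r : Pt) : dotp (c • p) r = c * dotp p r := by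
  simp [dotp]; ring
lemma norm_sq_pt (p : Pt) : ‖p‖ ^ 2 = p 0 ^ 2 + p 1 ^ 2 := by
  rw [EuclideanSpace.norm_eq, Real.sq_sqrt (by positivity)]
  simp [Fin.sum_univ_two]
lemma uvec_apply0 (t : ℝ) : uvec t 0 = Real.cos t := by simp [uvec, mk2]
lemma uvec_apply1 (t : ℝ) : uvec t 1 = Real.sin t := by simp [uvec, mk2]
lemma vvec_apply0 (t : ℝ) : vvec t 0 = -Real.sin t := by simp [vvec, mk2]
lemma vvec_apply1 (t : ℝ) : vvec t 1 = Real.cos t := by simp [vvec, mk2]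
lemma dotp_basis_u (d : Pt) (r τ : ℝ) :
    dotp d (uvec τ) = Real.cos (τ - r) * dotp d (uvec r) + Real.sin (τ - r) * dotp d (vvec r) := by
  have h := Real.sin_sq_add_cos_sq r
  simp [dotp, uvec_apply0, uvec_apply1, vvec_apply0, vvec_apply1, Real.cos_sub, Real.sin_sub]
  linear_combination (-(d 0 * Real.cos τ) - d 1 * Real.sin τ) * h
lemma dotp_basis_v (d : Pt) (r τ : ℝ) :
    dotp d (vvec τ) = -Real.sin (τ - r) * dotp d (uvec r) + Real.cos (τ - r) * dotp d (vvec r) := by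
  have h := Real.sin_sq_add_cos_sq r
  simp [dotp, uvec_apply0, uvec_apply1, vvec_apply0, vvec_apply1, Real.cos_sub, Real.sin_sub]
  linear_combination (d 0 * Real.sin τ - d 1 * Real.cos τ) * h
lemma norm_sq_dotp (d : Pt) (r : ℝ) :
    dotp d (uvec r) ^ 2 + dotp d (vvec r) ^ 2 = ‖d‖ ^ 2 := by
  rw [norm_sq_pt]
  have h := Real.sin_sq_add_cos_sq r
  simp only [dotp, uvec_apply0, uvec_apply1, vvec_apply0, vvec_apply1]
  nlinarith [h]
lemma abs_dotp_u_le (d : Pt) (r : ℝ) : |dotp d (uvec r)| ≤ ‖d‖ := by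
  have h := norm_sq_dotp d r
  have : dotp d (uvec r) ^ 2 ≤ ‖d‖ ^ 2 := by nlinarith [sq_nonneg (dotp d (vvec r))]
  have h2 := Real.sqrt_le_sqrt this
  rwa [Real.sqrt_sq_eq_abs, Real.sqrt_sq (norm_nonneg d)] at h2
lemma abs_dotp_v_le (d : Pt) (r : ℝ) : |dotp d (vvec r)| ≤ ‖d‖ := by
  have h := norm_sq_dotp d r
  have h1 : dotp d (vvec r) ^ 2 ≤ ‖d‖ ^ 2 := by nlinarith [sq_nonneg (dotp d (uvec r))]
  have h2 := Real.sqrt_le_sqrt h1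
  rwa [Real.sqrt_sq_eq_abs, Real.sqrt_sq (norm_nonneg d)] at h2
lemma sin_sq_le_sq (y : ℝ) : Real.sin y ^ 2 ≤ y ^ 2 := by
  rcases eq_or_ne y 0 with h | h
  · simp [h]
  · exact (Real.sin_sq_lt_sq h).le

lemma two_sub_two_cos_le (y : ℝ) : 2 - 2 * Real.cos y ≤ y ^ 2 := by
  have h1 := Real.cos_sq (y / 2)
  rw [show 2 * (y / 2) = y by ring] at h1
  have h2 := sin_sq_le_sq (y / 2)
  have h3 := Real.sin_sq_add_cos_sq (y / 2)
  nlinarith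

lemma norm_vvec_sub (t r : ℝ) : ‖vvec t - vvec r‖ ≤ |t - r| := by
  have h1 : ‖vvec t - vvec r‖ ^ 2 = 2 - 2 * Real.cos (t - r) := by
    rw [norm_sq_pt]
    simp only [PiLp.sub_apply, vvec_apply0, vvec_apply1]
    have := Real.sin_sq_add_cos_sq t
    have := Real.sin_sq_add_cos_sq r
    rw [Real.cos_sub]
    ring_nf
    nlinarith [Real.sin_sq_add_cos_sq t, Real.sin_sq_add_cos_sq r]
  have h2 : ‖vvec t - vvec r‖ ^ 2 ≤ (t - r) ^ 2 := by
    rw [h1]; exact two_sub_two_cos_le _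
  have h3 := Real.sqrt_le_sqrt h2
  rwa [Real.sqrt_sq (norm_nonneg _), Real.sqrt_sq_eq_abs] at h3

-- SUPPORT / EDGE BASICS
lemma continuous_dotp_uvec (t : ℝ) : Continuous (fun p : Pt => dotp p (uvec t)) := by
  simp only [dotp]
  fun_prop

lemma le_suppFn {K : Set Pt} (hK : IsConvexBody K) (t : ℝ) {p : Pt} (hp : p ∈ K) :
    dotp p (uvec t) ≤ suppFn K t := by
  apply le_csSup
  · exact (hK.2.1.image (continuous_dotp_uvec t)).bddAbove
  · exact ⟨p, hp, rfl⟩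

lemma suppFn_attained {K : Set Pt} (hK : IsConvexBody K) (t : ℝ) :
    ∃ p ∈ K, dotp p (uvec t) = suppFn K t := by
  have h := (hK.2.1.image (continuous_dotp_uvec t)).sSup_mem (hK.1.image _)
  obtain ⟨p, hp, hp2⟩ := h
  exact ⟨p, hp, hp2⟩

lemma edge_nonempty {K : Set Pt} (hK : IsConvexBody K) (t : ℝ) : (edge K t).Nonempty := by
  obtain ⟨p, hp, hp2⟩ := suppFn_attained hK t
  exact ⟨p, hp, hp2⟩

lemma edge_compact {K : Set Pt} (hK : IsConvexBody K) (t : ℝ) : IsCompact (edge K t) := by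
  apply hK.2.1.inter_right
  exact (isClosed_singleton (x := suppFn K t)).preimage (continuous_dotp_uvec t)

lemma edge_convex {K : Set Pt} (hK : IsConvexBody K) (t : ℝ) : Convex ℝ (edge K t) := by
  apply hK.2.2.inter
  intro p hp q hq α β hα hβ hab
  simp only [suppLine, mem_setOf_eq] at *
  rw [dotp_add_left, dotp_smul_left, dotp_smul_left, hp, hq]
  linear_combination suppFn K t * hab

lemma continuous_dotp_vvec (t : ℝ) : Continuous (fun p : Pt => dotp p (vvec t)) := by
  simp only [dotp]
  fun_prop

lemma decomp (p : Pt) (t : ℝ) :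
    p = dotp p (uvec t) • uvec t + dotp p (vvec t) • vvec t := by
  have h := Real.sin_sq_add_cos_sq t
  ext i
  fin_cases i
  · simp [dotp, uvec, vvec, mk2]
    linear_combination (-(p 0)) * h
  · simp [dotp, uvec, vvec, mk2]
    linear_combination (-(p 1)) * h

lemma vplus_mem {K : Set Pt} (hK : IsConvexBody K) (t : ℝ) : vplus K t ∈ edge K t := by
  have h := ((edge_compact hK t).image (continuous_dotp_vvec t)).sSup_mem
    ((edge_nonempty hK t).image _)
  obtain ⟨p, hp, hp2⟩ := h
  have hline : dotp p (uvec t) = suppFn K t := hp.2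
  have : vplus K t = p := by
    simp only at hp2
    rw [vplus, ← hp2, ← hline]
    exact (decomp p t).symm
  rw [this]; exact hp

lemma dotp_vplus_v_ge {K : Set Pt} (hK : IsConvexBody K) (t : ℝ) {q : Pt} (hq : q ∈ edge K t) :
    dotp q (vvec t) ≤ dotp (vplus K t) (vvec t) := by
  have hb : BddAbove ((fun p => dotp p (vvec t)) '' edge K t) :=
    ((edge_compact hK t).image (continuous_dotp_vvec t)).bddAbove
  have h1 : dotp q (vvec t) ≤ sSup ((fun p => dotp p (vvec t)) '' edge K t) :=
    le_csSup hb ⟨q, hq, rfl⟩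
  have h2 : dotp (vplus K t) (vvec t) = sSup ((fun p => dotp p (vvec t)) '' edge K t) := by
    rw [vplus, dotp_add_left, dotp_smul_left, dotp_smul_left]
    have hu : dotp (uvec t) (vvec t) = 0 := by
      simp [dotp, uvec_apply0, uvec_apply1, vvec_apply0, vvec_apply1]; ring
    have hv : dotp (vvec t) (vvec t) = 1 := by
      have := Real.sin_sq_add_cos_sq t
      simp [dotp, vvec_apply0, vvec_apply1]; nlinarith
    rw [hu, hv]; ring
  rw [h2]; exact h1

-- max of projection onto vvec r over edge t, when cos (t - r) > 0
lemma edge_max_proj {K : Set Pt} (hK : IsConvexBody K) {t r : ℝ} (hc : 0 < Real.cos (t - r))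
    {q : Pt} (hq : q ∈ edge K t) : dotp q (vvec r) ≤ dotp (vplus K t) (vvec r) := by
  have h1 : dotp (vplus K t - q) (vvec r) =
      Real.sin (t - r) * dotp (vplus K t - q) (uvec t) +
        Real.cos (t - r) * dotp (vplus K t - q) (vvec t) := by
    have h := dotp_basis_v (vplus K t - q) t r
    rw [show r - t = -(t - r) by ring, Real.sin_neg, Real.cos_neg] at h
    linarith [h]
  have h2 : dotp (vplus K t - q) (uvec t) = 0 := by
    rw [dotp_sub_left]
    have ha : dotp (vplus K t) (uvec t) = suppFn K t := (vplus_mem hK t).2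
    have hb : dotp q (uvec t) = suppFn K t := hq.2
    rw [ha, hb, sub_self]
  have h3 : 0 ≤ dotp (vplus K t - q) (vvec t) := by
    rw [dotp_sub_left]
    have := dotp_vplus_v_ge hK t hq
    linarith
  have h4 : 0 ≤ dotp (vplus K t - q) (vvec r) := by
    rw [h1, h2]
    nlinarith
  rw [dotp_sub_left] at h4
  linarith

-- CONE LEMMAS
lemma trig_cone {θ₁ θ₂ δ α β : ℝ} (hδ : δ < π/2) (ha1 : -δ ≤ θ₁) (h12 : θ₁ ≤ θ₂) (ha2 : θ₂ ≤ δ)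
    (hA : α * Real.cos θ₁ + β * Real.sin θ₁ ≤ 0)
    (hB : 0 ≤ α * Real.cos θ₂ + β * Real.sin θ₂) :
    |α| ≤ |β| * Real.tan δ ∧ (θ₁ < θ₂ → 0 ≤ β) := by
  have hδ0 : 0 ≤ δ := by linarith
  have hmem1 : θ₁ ∈ Ioo (-(π/2)) (π/2) := ⟨by linarith, by linarith⟩
  have hmem2 : θ₂ ∈ Ioo (-(π/2)) (π/2) := ⟨by linarith, by linarith⟩
  have hmemδ : δ ∈ Ioo (-(π/2)) (π/2) := ⟨by linarith [Real.pi_pos], by linarith⟩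
  have hmemδ' : -δ ∈ Ioo (-(π/2)) (π/2) := ⟨by linarith, by linarith [Real.pi_pos]⟩
  have hc1 : 0 < Real.cos θ₁ := Real.cos_pos_of_mem_Ioo hmem1
  have hc2 : 0 < Real.cos θ₂ := Real.cos_pos_of_mem_Ioo hmem2
  have h1 : α ≤ -β * Real.tan θ₁ := by
    rw [← mul_le_mul_iff_of_pos_right hc1, mul_assoc, Real.tan_mul_cos hc1.ne']
    linarith
  have h2 : -β * Real.tan θ₂ ≤ α := by
    rw [← mul_le_mul_iff_of_pos_right hc2, mul_assoc, Real.tan_mul_cos hc2.ne']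
    linarith
  have ht1u : Real.tan θ₁ ≤ Real.tan δ :=
    Real.strictMonoOn_tan.monotoneOn hmem1 hmemδ (by linarith)
  have ht1l : -Real.tan δ ≤ Real.tan θ₁ := by
    have := Real.strictMonoOn_tan.monotoneOn hmemδ' hmem1 ha1
    rwa [Real.tan_neg] at this
  have ht2u : Real.tan θ₂ ≤ Real.tan δ :=
    Real.strictMonoOn_tan.monotoneOn hmem2 hmemδ ha2
  have ht2l : -Real.tan δ ≤ Real.tan θ₂ := by
    have := Real.strictMonoOn_tan.monotoneOn hmemδ' hmem2 (by linarith)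
    rwa [Real.tan_neg] at this
  constructor
  · rcases le_or_gt 0 β with hb | hb
    · rw [abs_of_nonneg hb]
      apply abs_le.mpr
      constructor <;> nlinarith
    · rw [abs_of_neg hb]
      apply abs_le.mpr
      constructor <;> nlinarith
  · intro hlt
    have := Real.strictMonoOn_tan hmem1 hmem2 hlt
    nlinarith

lemma cone {K : Set Pt} (hK : IsConvexBody K) {s t' τ₁ τ₂ : ℝ}
    (hs : s ≤ τ₁) (h12 : τ₁ ≤ τ₂) (h2 : τ₂ ≤ t') (hδ : t' - s < π/2)
    {p q : Pt} (hp : p ∈ edge K τ₁) (hq : q ∈ edge K τ₂) :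
    |dotp (q - p) (uvec t')| ≤ |dotp (q - p) (vvec t')| * Real.tan (t' - s) ∧
      (τ₁ < τ₂ → 0 ≤ dotp (q - p) (vvec t')) := by
  have hA : dotp (q - p) (uvec τ₁) ≤ 0 := by
    rw [dotp_sub_left]
    have := le_suppFn hK τ₁ hq.1
    have hp2 := hp.2
    simp only [suppLine, mem_setOf_eq] at hp2
    linarith
  have hB : 0 ≤ dotp (q - p) (uvec τ₂) := by
    rw [dotp_sub_left]
    have := le_suppFn hK τ₂ hp.1
    have hq2 := hq.2
    simp only [suppLine, mem_setOf_eq] at hq2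
    linarith
  rw [dotp_basis_u (q - p) t' τ₁] at hA
  rw [dotp_basis_u (q - p) t' τ₂] at hB
  have := trig_cone (θ₁ := τ₁ - t') (θ₂ := τ₂ - t') (δ := t' - s)
    (α := dotp (q - p) (uvec t')) (β := dotp (q - p) (vvec t'))
    hδ (by linarith) (by linarith) (by linarith)
    (by rw [mul_comm (Real.cos (τ₁ - t')), mul_comm (Real.sin (τ₁ - t'))] at hA; linarith)
    (by rw [mul_comm (Real.cos (τ₂ - t')), mul_comm (Real.sin (τ₂ - t'))] at hB; linarith)
  exact ⟨this.1, fun h => this.2 (by linarith)⟩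

lemma cone_norm {K : Set Pt} (hK : IsConvexBody K) {s t' τ₁ τ₂ : ℝ}
    (hs : s ≤ τ₁) (h12 : τ₁ ≤ τ₂) (h2 : τ₂ ≤ t') (hδ : t' - s < π/2)
    {p q : Pt} (hp : p ∈ edge K τ₁) (hq : q ∈ edge K τ₂) :
    ‖q - p‖ * Real.cos (t' - s) ≤ |dotp (q - p) (vvec t')| := by
  set α := dotp (q - p) (uvec t') with hα
  set β := dotp (q - p) (vvec t') with hβ
  have hδ0 : 0 ≤ t' - s := by linarith
  have hcpos : 0 < Real.cos (t' - s) :=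
    Real.cos_pos_of_mem_Ioo ⟨by linarith [Real.pi_pos], hδ⟩
  have hspos : 0 ≤ Real.sin (t' - s) := Real.sin_nonneg_of_nonneg_of_le_pi hδ0 (by linarith [Real.pi_pos])
  have h1 : |α| ≤ |β| * Real.tan (t' - s) := (cone hK hs h12 h2 hδ hp hq).1
  have h1' : |α| * Real.cos (t' - s) ≤ |β| * Real.sin (t' - s) := by
    have := mul_le_mul_of_nonneg_right h1 hcpos.le
    rwa [mul_assoc, Real.tan_mul_cos hcpos.ne'] at this
  have hns : α ^ 2 + β ^ 2 = ‖q - p‖ ^ 2 := norm_sq_dotp (q - p) t'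
  have hsc := Real.sin_sq_add_cos_sq (t' - s)
  have hq1 : α ^ 2 * Real.cos (t' - s) ^ 2 ≤ β ^ 2 * Real.sin (t' - s) ^ 2 := by
    have h := pow_le_pow_left₀ (by positivity) h1' 2
    rwa [mul_pow, mul_pow, sq_abs, sq_abs] at h
  have hsq : (‖q - p‖ * Real.cos (t' - s)) ^ 2 ≤ β ^ 2 := by
    nlinarith [sq_nonneg β]
  have hle : ‖q - p‖ * Real.cos (t' - s) = Real.sqrt ((‖q - p‖ * Real.cos (t' - s)) ^ 2) :=
    (Real.sqrt_sq (by positivity)).symm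
  rw [hle, ← Real.sqrt_sq_eq_abs]
  exact Real.sqrt_le_sqrt hsq

-- CONTINUITY OF SUPPORT FUNCTION AND LIMITS
lemma dotp_sub_right (p q r : Pt) : dotp p (q - r) = dotp p q - dotp p r := by
  simp [dotp]; ring

lemma norm_uvec_sub (t r : ℝ) : ‖uvec t - uvec r‖ ≤ |t - r| := by
  have h1 : ‖uvec t - uvec r‖ ^ 2 = 2 - 2 * Real.cos (t - r) := by
    rw [norm_sq_pt]
    simp only [PiLp.sub_apply, uvec_apply0, uvec_apply1]
    rw [Real.cos_sub]
    nlinarith [Real.sin_sq_add_cos_sq t, Real.sin_sq_add_cos_sq r]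
  have h2 : ‖uvec t - uvec r‖ ^ 2 ≤ (t - r) ^ 2 := by
    rw [h1]; exact two_sub_two_cos_le _
  have h3 := Real.sqrt_le_sqrt h2
  rwa [Real.sqrt_sq (norm_nonneg _), Real.sqrt_sq_eq_abs] at h3

lemma abs_dotp_le (p q : Pt) : |dotp p q| ≤ ‖p‖ * ‖q‖ := by
  have : dotp p q = inner ℝ p q := by
    simp [dotp, PiLp.inner_apply, Fin.sum_univ_two, RCLike.inner_apply, mul_comm]
  rw [this]
  exact abs_real_inner_le_norm p q

lemma suppFn_lipschitz {K : Set Pt} (hK : IsConvexBody K) :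
    ∃ R : ℝ, 0 ≤ R ∧ ∀ t r : ℝ, |suppFn K t - suppFn K r| ≤ R * |t - r| := by
  obtain ⟨R, hR0, hR⟩ : ∃ R : ℝ, 0 ≤ R ∧ ∀ p ∈ K, ‖p‖ ≤ R := by
    obtain ⟨R, hR⟩ := hK.2.1.isBounded.exists_norm_le
    exact ⟨max R 0, le_max_right _ _, fun p hp => (hR p hp).trans (le_max_left _ _)⟩
  refine ⟨R, hR0, fun t r => ?_⟩
  have key : ∀ t r : ℝ, suppFn K t - suppFn K r ≤ R * |t - r| := by
    intro t r
    obtain ⟨p, hp, hp2⟩ := suppFn_attained hK t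
    have h1 : dotp p (uvec t) - dotp p (uvec r) ≤ R * |t - r| := by
      rw [← dotp_sub_right]
      calc dotp p (uvec t - uvec r) ≤ |dotp p (uvec t - uvec r)| := le_abs_self _
        _ ≤ ‖p‖ * ‖uvec t - uvec r‖ := abs_dotp_le _ _
        _ ≤ R * |t - r| := by
            apply mul_le_mul (hR p hp) (norm_uvec_sub t r) (norm_nonneg _) hR0
    have h2 : dotp p (uvec r) ≤ suppFn K r := le_suppFn hK r hp
    linarith
  have h1 := key t r
  have h2 := key r t
  rw [abs_sub_comm r t] at h2
  apply abs_le.mpr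
  constructor <;> linarith

lemma suppFn_continuous {K : Set Pt} (hK : IsConvexBody K) : Continuous (suppFn K) := by
  obtain ⟨R, hR0, hR⟩ := suppFn_lipschitz hK
  apply LipschitzWith.continuous (K := Real.toNNReal R)
  apply LipschitzWith.of_dist_le_mul
  intro t r
  rw [Real.dist_eq, Real.dist_eq, Real.coe_toNNReal R hR0]
  exact hR t r

lemma tendsto_pt_apply {p : ℕ → Pt} {q : Pt} (h : Tendsto p atTop (𝓝 q)) (i : Fin 2) :
    Tendsto (fun n => p n i) atTop (𝓝 (q i)) := by
  have : Continuous (fun x : Pt => x i) := (continuous_apply i).comp (PiLp.continuous_ofLp 2 _)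
  exact (this.tendsto q).comp h

lemma tendsto_dotp_uvec {p : ℕ → Pt} {q : Pt} {τ : ℕ → ℝ} {τ₀ : ℝ}
    (hp : Tendsto p atTop (𝓝 q)) (hτ : Tendsto τ atTop (𝓝 τ₀)) :
    Tendsto (fun n => dotp (p n) (uvec (τ n))) atTop (𝓝 (dotp q (uvec τ₀))) := by
  simp only [dotp, uvec_apply0, uvec_apply1]
  exact ((tendsto_pt_apply hp 0).mul
      ((Real.continuous_cos.tendsto _).comp hτ)).add
    ((tendsto_pt_apply hp 1).mul ((Real.continuous_sin.tendsto _).comp hτ))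

lemma exists_lim_edge {K : Set Pt} (hK : IsConvexBody K) {τ : ℕ → ℝ} {τ₀ : ℝ}
    (hτ : Tendsto τ atTop (𝓝 τ₀)) :
    ∃ q ∈ edge K τ₀, ∃ φ : ℕ → ℕ, StrictMono φ ∧
      Tendsto (fun n => vplus K (τ (φ n))) atTop (𝓝 q) := by
  have hmem : ∀ n, vplus K (τ n) ∈ K := fun n => (vplus_mem hK (τ n)).1
  obtain ⟨q, hqK, φ, hφ, hconv⟩ := hK.2.1.tendsto_subseq hmem
  refine ⟨q, ⟨hqK, ?_⟩, φ, hφ, hconv⟩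
  have hτφ : Tendsto (fun n => τ (φ n)) atTop (𝓝 τ₀) := hτ.comp hφ.tendsto_atTop
  have h1 : Tendsto (fun n => dotp (vplus K (τ (φ n))) (uvec (τ (φ n)))) atTop
      (𝓝 (dotp q (uvec τ₀))) := tendsto_dotp_uvec hconv hτφ
  have h2 : ∀ n, dotp (vplus K (τ (φ n))) (uvec (τ (φ n))) = suppFn K (τ (φ n)) := by
    intro n; exact (vplus_mem hK _).2
  have h3 : Tendsto (fun n => suppFn K (τ (φ n))) atTop (𝓝 (suppFn K τ₀)) :=
    ((suppFn_continuous hK).tendsto τ₀).comp hτφ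
  have h4 : Tendsto (fun n => dotp (vplus K (τ (φ n))) (uvec (τ (φ n)))) atTop
      (𝓝 (suppFn K τ₀)) := by
    simp only [h2]; exact h3
  exact tendsto_nhds_unique h1 h4

-- ARC LEMMAS
section Arc
variable {K : Set Pt} {s t' : ℝ}

def arcSet (K : Set Pt) (s t' : ℝ) : Set Pt := ⋃ τ ∈ Ioc s t', edge K τ

lemma m_mono (hK : IsConvexBody K) (hδ : t' - s < π/2) {τ₁ τ₂ : ℝ}
    (h1 : s ≤ τ₁) (h12 : τ₁ ≤ τ₂) (h2 : τ₂ ≤ t') :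
    dotp (vplus K τ₁) (vvec t') ≤ dotp (vplus K τ₂) (vvec t') := by
  rcases eq_or_lt_of_le h12 with h | h
  · rw [h]
  · have := (cone hK h1 h12 h2 hδ (vplus_mem hK τ₁) (vplus_mem hK τ₂)).2 h
    rw [dotp_sub_left] at this
    linarith

lemma arc_range (hK : IsConvexBody K) (hδ : t' - s < π/2) {r : Pt}
    (hr : r ∈ arcSet K s t') :
    dotp (vplus K s) (vvec t') ≤ dotp r (vvec t') ∧
      dotp r (vvec t') ≤ dotp (vplus K t') (vvec t') := by
  obtain ⟨τ, hτ, hrτ⟩ := mem_iUnion₂.mp hr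
  have hδ0 : 0 ≤ t' - s := by linarith [hτ.1, hτ.2]
  constructor
  · have := (cone hK (le_refl s) hτ.1.le hτ.2 hδ (vplus_mem hK s) hrτ).2 hτ.1
    rw [dotp_sub_left] at this
    linarith
  · rcases eq_or_lt_of_le hτ.2 with h | h
    · subst h
      exact edge_max_proj hK (by rw [sub_self]; norm_num) hrτ
    · have := (cone hK hτ.1.le h.le (le_refl t') hδ hrτ (vplus_mem hK t')).2 h
      rw [dotp_sub_left] at this
      linarith

lemma arc_pair (hK : IsConvexBody K) (hst : s < t') (hδ : t' - s < π/2) {p q : Pt}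
    (hp : p ∈ arcSet K s t') (hq : q ∈ arcSet K s t') :
    ‖q - p‖ * Real.cos (t' - s) ≤ |dotp (q - p) (vvec t')| := by
  obtain ⟨τ₁, hτ₁, hp1⟩ := mem_iUnion₂.mp hp
  obtain ⟨τ₂, hτ₂, hq2⟩ := mem_iUnion₂.mp hq
  rcases le_total τ₁ τ₂ with h | h
  · exact cone_norm hK hτ₁.1.le h hτ₂.2 hδ hp1 hq2
  · have h2 := cone_norm hK hτ₂.1.le h hτ₁.2 hδ hq2 hp1
    have e1 : p - q = -(q - p) := by abel
    have e2 : dotp (p - q) (vvec t') = -(dotp (q - p) (vvec t')) := by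
      rw [dotp_sub_left, dotp_sub_left]; ring
    rw [e1, norm_neg] at h2
    rw [e1] at e2
    rw [e2] at h2
    rwa [abs_neg] at h2
end Arc

section Surj
variable {K : Set Pt} {s t' : ℝ}

lemma arc_surj (hK : IsConvexBody K) (hst : s < t') (hδ : t' - s < π/2) :
    Ioo (dotp (vplus K s) (vvec t')) (dotp (vplus K t') (vvec t')) ⊆
      (fun p => dotp p (vvec t')) '' arcSet K s t' := by
  intro c hc
  set T : Set ℝ := {τ ∈ Icc s t' | dotp (vplus K τ) (vvec t') < c} with hT
  have hsT : s ∈ T := ⟨⟨le_refl s, hst.le⟩, hc.1⟩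
  have hTne : T.Nonempty := ⟨s, hsT⟩
  have hbdd : BddAbove T := ⟨t', fun τ hτ => hτ.1.2⟩
  set τ₀ := sSup T with hτ₀
  have hτ₀s : s ≤ τ₀ := le_csSup hbdd hsT
  have hτ₀t : τ₀ ≤ t' := csSup_le hTne (fun τ hτ => hτ.1.2)
  -- Claim A : a point of the edge at τ₀ with small projection
  have claimA : ∃ qm ∈ edge K τ₀, dotp qm (vvec t') ≤ c := by
    by_cases h : dotp (vplus K τ₀) (vvec t') ≤ c
    · exact ⟨vplus K τ₀, vplus_mem hK τ₀, h⟩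
    · obtain ⟨u, hu_mono, hu_tendsto, hu_mem⟩ := exists_seq_tendsto_sSup hTne hbdd
      obtain ⟨q, hq, φ, hφ, hconv⟩ := exists_lim_edge hK hu_tendsto
      refine ⟨q, hq, ?_⟩
      have hv : Tendsto (fun n => dotp (vplus K (u (φ n))) (vvec t')) atTop
          (𝓝 (dotp q (vvec t'))) := ((continuous_dotp_vvec t').tendsto q).comp hconv
      apply le_of_tendsto hv
      filter_upwards with n
      exact (hu_mem (φ n)).2.le
  -- Claim B : a point of the edge at τ₀ with large projection
  have claimB : ∃ qp ∈ edge K τ₀, c ≤ dotp qp (vvec t') := by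
    by_cases h : c ≤ dotp (vplus K τ₀) (vvec t')
    · exact ⟨vplus K τ₀, vplus_mem hK τ₀, h⟩
    · push_neg at h
      have hτ₀t' : τ₀ < t' := by
        rcases eq_or_lt_of_le hτ₀t with he | hl
        · exfalso; rw [he] at h; exact absurd hc.2 (by linarith)
        · exact hl
      set u : ℕ → ℝ := fun n => τ₀ + (t' - τ₀) / (n + 1) with hu
      have hu_tendsto : Tendsto u atTop (𝓝 τ₀) := by
        have h0 : Tendsto (fun n : ℕ => (t' - τ₀) / (n + 1)) atTop (𝓝 0) := by
          have := tendsto_one_div_add_atTop_nhds_zero_nat (𝕜 := ℝ)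
          have h2 := this.const_mul (t' - τ₀)
          simp only [mul_zero] at h2
          convert h2 using 2 with n
          field_simp
        have := h0.const_add τ₀
        simpa using this
      obtain ⟨q, hq, φ, hφ, hconv⟩ := exists_lim_edge hK hu_tendsto
      refine ⟨q, hq, ?_⟩
      have hv : Tendsto (fun n => dotp (vplus K (u (φ n))) (vvec t')) atTop
          (𝓝 (dotp q (vvec t'))) := ((continuous_dotp_vvec t').tendsto q).comp hconv
      apply ge_of_tendsto hv
      filter_upwards with n
      have hun1 : τ₀ < u (φ n) := by
        have : (0:ℝ) < (t' - τ₀) / (φ n + 1) := by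
          apply div_pos (by linarith) (by positivity)
        simp only [hu]; linarith
      have hun2 : u (φ n) ≤ t' := by
        have h1 : (t' - τ₀) / (φ n + 1) ≤ t' - τ₀ := by
          apply div_le_self (by linarith)
          linarith [Nat.cast_nonneg (α := ℝ) (φ n)]
        simp only [hu]; linarith
      have : u (φ n) ∉ T := fun hmem => absurd (le_csSup hbdd hmem) (not_le.mpr hun1)
      have : ¬ (dotp (vplus K (u (φ n))) (vvec t') < c) := fun hlt =>
        this ⟨⟨by linarith, hun2⟩, hlt⟩
      linarith [not_lt.mp this]
  obtain ⟨qm, hqm, hqmc⟩ := claimA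
  obtain ⟨qp, hqp, hqpc⟩ := claimB
  -- τ₀ > s
  have hsτ₀ : s < τ₀ := by
    rcases eq_or_lt_of_le hτ₀s with he | hl
    · exfalso
      have hcos : 0 < Real.cos (s - t') := by
        rw [show s - t' = -(t' - s) by ring, Real.cos_neg]
        exact Real.cos_pos_of_mem_Ioo ⟨by linarith [Real.pi_pos], hδ⟩
      have hqp' : qp ∈ edge K s := by rw [he]; exact hqp
      have := edge_max_proj hK hcos hqp'
      linarith [hc.1]
    · exact hl
  -- intermediate value on the segment [qm, qp] inside the edge
  have hedge_conv := edge_convex hK τ₀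
  have key : ∃ r ∈ edge K τ₀, dotp r (vvec t') = c := by
    rcases eq_or_lt_of_le hqmc with he | hlt
    · exact ⟨qm, hqm, he⟩
    · rcases eq_or_lt_of_le hqpc with he2 | hlt2
      · exact ⟨qp, hqp, he2.symm⟩
      · set A1 := dotp qm (vvec t') with hA1
        set A2 := dotp qp (vvec t') with hA2
        set lam := (c - A1) / (A2 - A1) with hlam
        have hA12 : A1 < A2 := by linarith
        have hlam0 : 0 ≤ lam := by
          apply div_nonneg (by linarith) (by linarith)
        have hlam1 : lam ≤ 1 := by
          rw [div_le_one (by linarith)]; linarith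
        refine ⟨(1 - lam) • qm + lam • qp, ?_, ?_⟩
        · exact hedge_conv hqm hqp (by linarith) hlam0 (by ring)
        · rw [dotp_add_left, dotp_smul_left, dotp_smul_left, ← hA1, ← hA2, hlam]
          have hne : A2 - A1 ≠ 0 := by linarith
          field_simp
          ring
  obtain ⟨r, hr, hrc⟩ := key
  exact ⟨r, mem_iUnion₂.mpr ⟨τ₀, ⟨hsτ₀, hτ₀t⟩, hr⟩, hrc⟩
end Surj

-- MEASURE BOUNDS
section Meas
variable {K : Set Pt} {s t' : ℝ}

lemma proj_lipschitz (t' : ℝ) : LipschitzWith 1 (fun p : Pt => dotp p (vvec t')) := by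
  apply LipschitzWith.of_dist_le_mul
  intro p q
  rw [Real.dist_eq, dist_eq_norm, NNReal.coe_one, one_mul, ← dotp_sub_left]
  exact abs_dotp_v_le _ _

lemma arc_meas_lb (hK : IsConvexBody K) (hst : s < t') (hδ : t' - s < π/2) :
    ENNReal.ofReal (dotp (vplus K t') (vvec t') - dotp (vplus K s) (vvec t')) ≤
      μH[1] (arcSet K s t') := by
  set m1 := dotp (vplus K s) (vvec t')
  set m2 := dotp (vplus K t') (vvec t')
  have h1 : ENNReal.ofReal (m2 - m1) = μH[1] (Ioo m1 m2) := by
    rw [MeasureTheory.hausdorffMeasure_real, Real.volume_Ioo]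
  rw [h1]
  calc μH[1] (Ioo m1 m2) ≤ μH[1] ((fun p : Pt => dotp p (vvec t')) '' arcSet K s t') :=
        measure_mono (arc_surj hK hst hδ)
    _ ≤ ((1 : NNReal) : ENNReal) ^ (1:ℝ) * μH[1] (arcSet K s t') :=
        (proj_lipschitz t').hausdorffMeasure_image_le (by norm_num) _
    _ = μH[1] (arcSet K s t') := by simp

lemma arc_meas_ub (hK : IsConvexBody K) (hst : s < t') (hδ : t' - s < π/2) :
    μH[1] (arcSet K s t') ≤
      ENNReal.ofReal ((dotp (vplus K t') (vvec t') - dotp (vplus K s) (vvec t')) /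
        Real.cos (t' - s)) := by
  set A := arcSet K s t' with hA
  set m1 := dotp (vplus K s) (vvec t')
  set m2 := dotp (vplus K t') (vvec t')
  have hcδ : 0 < Real.cos (t' - s) :=
    Real.cos_pos_of_mem_Ioo ⟨by linarith [Real.pi_pos], hδ⟩
  set pr : Pt → ℝ := fun p => dotp p (vvec t') with hpr
  -- injectivity with Lipschitz inverse
  have hinj : ∀ p ∈ A, ∀ q ∈ A, pr p = pr q → p = q := by
    intro p hp q hq hpq
    have := arc_pair hK hst hδ hq hp
    rw [dotp_sub_left] at this
    have h0 : pr p - pr q = 0 := by rw [hpq]; ring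
    have : ‖p - q‖ * Real.cos (t' - s) ≤ 0 := by
      calc ‖p - q‖ * Real.cos (t' - s) ≤ |dotp p (vvec t') - dotp q (vvec t')| := this
        _ = 0 := by rw [show dotp p (vvec t') - dotp q (vvec t') = pr p - pr q from rfl, h0,
              abs_zero]
    have hn : ‖p - q‖ ≤ 0 := by nlinarith [norm_nonneg (p - q)]
    have := le_antisymm hn (norm_nonneg _)
    rwa [norm_sub_eq_zero_iff] at this
  classical
  set finv : ℝ → Pt := fun c => if h : ∃ p ∈ A, pr p = c then h.choose else 0 with hfinv
  have hfinv_spec : ∀ p ∈ A, finv (pr p) = p := by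
    intro p hp
    have hex : ∃ q ∈ A, pr q = pr p := ⟨p, hp, rfl⟩
    simp only [hfinv, dif_pos hex]
    exact hinj _ hex.choose_spec.1 _ hp hex.choose_spec.2
  have hlip : LipschitzOnWith (Real.toNNReal (1 / Real.cos (t' - s))) finv (pr '' A) := by
    apply LipschitzOnWith.of_dist_le_mul
    rintro c1 ⟨p1, hp1, rfl⟩ c2 ⟨p2, hp2, rfl⟩
    rw [hfinv_spec p1 hp1, hfinv_spec p2 hp2, dist_eq_norm, Real.dist_eq,
      Real.coe_toNNReal _ (by positivity)]
    have := arc_pair hK hst hδ hp2 hp1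
    rw [dotp_sub_left] at this
    rw [show pr p1 - pr p2 = dotp p1 (vvec t') - dotp p2 (vvec t') from rfl]
    rw [div_mul_eq_mul_div, le_div_iff₀ hcδ]
    linarith
  have hsub : A ⊆ finv '' (pr '' A) := by
    intro p hp
    exact ⟨pr p, ⟨p, hp, rfl⟩, hfinv_spec p hp⟩
  have hm0 : m1 ≤ m2 := m_mono hK hδ (le_refl s) hst.le (le_refl t')
  calc μH[1] A ≤ μH[1] (finv '' (pr '' A)) := measure_mono hsub
    _ ≤ ((Real.toNNReal (1 / Real.cos (t' - s))) : ENNReal) ^ (1:ℝ) * μH[1] (pr '' A) :=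
        hlip.hausdorffMeasure_image_le (by norm_num)
    _ = ENNReal.ofReal (1 / Real.cos (t' - s)) * μH[1] (pr '' A) := by
        rw [ENNReal.rpow_one]; rfl
    _ ≤ ENNReal.ofReal (1 / Real.cos (t' - s)) * ENNReal.ofReal (m2 - m1) := by
        apply mul_le_mul_right
        have hss : pr '' A ⊆ Icc m1 m2 := by
          rintro c ⟨p, hp, rfl⟩
          exact ⟨(arc_range hK hδ hp).1, (arc_range hK hδ hp).2⟩
        calc μH[1] (pr '' A) ≤ μH[1] (Icc m1 m2) := measure_mono hss
          _ = ENNReal.ofReal (m2 - m1) := by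
              rw [MeasureTheory.hausdorffMeasure_real, Real.volume_Icc]
    _ = ENNReal.ofReal ((m2 - m1) / Real.cos (t' - s)) := by
        rw [← ENNReal.ofReal_mul (by positivity)]
        congr 1
        field_simp
end Meas

-- PIECE ESTIMATES
lemma norm_uvec (t : ℝ) : ‖uvec t‖ = 1 := by
  have h : ‖uvec t‖ ^ 2 = 1 := by
    rw [norm_sq_pt, uvec_apply0, uvec_apply1]
    nlinarith [Real.sin_sq_add_cos_sq t]
  nlinarith [norm_nonneg (uvec t)]

lemma norm_vvec (t : ℝ) : ‖vvec t‖ = 1 := by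
  have h : ‖vvec t‖ ^ 2 = 1 := by
    rw [norm_sq_pt, vvec_apply0, vvec_apply1]
    nlinarith [Real.sin_sq_add_cos_sq t]
  nlinarith [norm_nonneg (vvec t)]

lemma continuous_vvec : Continuous vvec := by
  apply (PiLp.continuous_toLp 2 _).comp
  apply continuous_pi
  intro i
  fin_cases i
  · simp only [vvec, mk2]
    show Continuous fun t => -Real.sin t
    fun_prop
  · simp only [vvec, mk2]
    show Continuous Real.cos
    fun_prop

lemma piece_est {K : Set Pt} (hK : IsConvexBody K) {s t' : ℝ} (hst : s < t')
    (hδ : t' - s < π/2) (σ : Measure ℝ) (hEq : σ (Ioc s t') = μH[1] (arcSet K s t')) :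
    σ (Ioc s t') ≠ ⊤ ∧
      ‖(∫ t in Ioc s t', vvec t ∂σ) - (vplus K t' - vplus K s)‖ ≤
        (σ (Ioc s t')).toReal * ((t' - s) + (1 - Real.cos (t' - s)) + Real.tan (t' - s)) := by
  set Δ : Pt := vplus K t' - vplus K s with hΔ
  set α := dotp Δ (uvec t') with hα
  set β := dotp Δ (vvec t') with hβ
  have hδ0 : 0 < t' - s := by linarith
  have hcδ : 0 < Real.cos (t' - s) :=
    Real.cos_pos_of_mem_Ioo ⟨by linarith [Real.pi_pos], hδ⟩
  have hsδ : 0 ≤ Real.sin (t' - s) :=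
    Real.sin_nonneg_of_nonneg_of_le_pi hδ0.le (by linarith [Real.pi_pos])
  have htanδ : 0 ≤ Real.tan (t' - s) := by
    rw [Real.tan_eq_sin_div_cos]; positivity
  -- cone estimates for the chord
  have hcone := cone hK (le_refl s) hst.le (le_refl t') hδ (vplus_mem hK s) (vplus_mem hK t')
  have hβ0 : 0 ≤ β := hcone.2 hst
  have hαβ : |α| ≤ β * Real.tan (t' - s) := by
    have := hcone.1
    rwa [abs_of_nonneg hβ0] at this
  -- measure bounds
  have hub := arc_meas_ub hK hst hδ
  have hlb := arc_meas_lb hK hst hδ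
  have hβD : dotp (vplus K t') (vvec t') - dotp (vplus K s) (vvec t') = β := by
    rw [hβ, hΔ, dotp_sub_left]
  rw [hβD] at hub hlb
  rw [← hEq] at hub hlb
  have hne : σ (Ioc s t') ≠ ⊤ := by
    intro h
    rw [h] at hub
    exact absurd hub (by simp)
  refine ⟨hne, ?_⟩
  set E := (σ (Ioc s t')).toReal with hE
  have hElb : β ≤ E := by
    rw [hE]
    exact (ENNReal.ofReal_le_iff_le_toReal hne).mp hlb
  have hEub : E ≤ β / Real.cos (t' - s) := by
    rw [hE]
    exact ENNReal.toReal_le_of_le_ofReal (by positivity) hub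
  have hE0 : 0 ≤ E := ENNReal.toReal_nonneg
  -- finite restricted measure
  have hfin : σ (Ioc s t') < ⊤ := lt_top_iff_ne_top.mpr hne
  have hint : IntegrableOn vvec (Ioc s t') σ := by
    apply Measure.integrableOn_of_bounded (M := 1) hne
      continuous_vvec.aestronglyMeasurable
    filter_upwards with t
    rw [norm_vvec]
  -- step 1 : replace vvec t by vvec t'
  have hstep1 : ‖(∫ t in Ioc s t', vvec t ∂σ) - E • vvec t'‖ ≤ E * (t' - s) := by
    have hconst : ∫ _ in Ioc s t', vvec t' ∂σ = E • vvec t' := by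
      rw [MeasureTheory.setIntegral_const]; rfl
    rw [← hconst, ← MeasureTheory.integral_sub hint (integrableOn_const hne)]
    rw [mul_comm]
    apply MeasureTheory.norm_setIntegral_le_of_norm_le_const hfin
      (fun t ht => ?_)
    calc ‖vvec t - vvec t'‖ ≤ |t - t'| := norm_vvec_sub t t'
      _ ≤ t' - s := by rw [abs_of_nonpos (by linarith [ht.2])]; linarith [ht.1]
  -- step 2 : E • vvec t' vs β • vvec t'
  have hstep2 : ‖E • vvec t' - β • vvec t'‖ ≤ E * (1 - Real.cos (t' - s)) := by
    rw [← sub_smul, norm_smul, norm_vvec, mul_one, Real.norm_eq_abs,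
      abs_of_nonneg (by linarith)]
    have : β ≥ E * Real.cos (t' - s) := by
      rw [ge_iff_le, ← le_div_iff₀ hcδ] at *
      linarith [hEub]
    nlinarith [hcδ, Real.cos_le_one (t' - s)]
  -- step 3 : β • vvec t' vs Δ
  have hstep3 : ‖β • vvec t' - Δ‖ ≤ E * Real.tan (t' - s) := by
    have hdecomp := decomp Δ t'
    rw [← hα, ← hβ] at hdecomp
    have : β • vvec t' - Δ = -(α • uvec t') := by
      rw [hdecomp]; abel
    rw [this, norm_neg, norm_smul, norm_uvec, mul_one, Real.norm_eq_abs]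
    calc |α| ≤ β * Real.tan (t' - s) := hαβ
      _ ≤ E * Real.tan (t' - s) := by nlinarith
  calc ‖(∫ t in Ioc s t', vvec t ∂σ) - Δ‖
      ≤ ‖(∫ t in Ioc s t', vvec t ∂σ) - E • vvec t'‖ + ‖E • vvec t' - β • vvec t'‖ +
        ‖β • vvec t' - Δ‖ := by
        have := norm_sub_le_norm_sub_add_norm_sub
          ((∫ t in Ioc s t', vvec t ∂σ)) (E • vvec t') Δ
        have h2 := norm_sub_le_norm_sub_add_norm_sub (E • vvec t') (β • vvec t') Δ
        linarith
    _ ≤ E * (t' - s) + E * (1 - Real.cos (t' - s)) + E * Real.tan (t' - s) := by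
        linarith
    _ = E * ((t' - s) + (1 - Real.cos (t' - s)) + Real.tan (t' - s)) := by ring

-- PARTITION
lemma iUnion_Ioc_parts (f : ℕ → ℝ) (hf : Monotone f) (n : ℕ) :
    (⋃ i ∈ Finset.range n, Ioc (f i) (f (i+1))) = Ioc (f 0) (f n) := by
  induction n with
  | zero => simp
  | succ n ih =>
      rw [Finset.range_add_one, Finset.set_biUnion_insert, ih, Set.union_comm,
        Set.Ioc_union_Ioc_eq_Ioc (hf (Nat.zero_le n)) (hf (Nat.le_succ n))]


theorem stmt_11 (K : Set Pt) (hK : IsConvexBody K) (a b : ℝ) (hab : a < b)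
    (hb : b ≤ a + 2*π) (σ : Measure ℝ)
    (hσ : ∀ X : Set ℝ, MeasurableSet X → X ⊆ Ioc a (a + 2*π) →
      σ X = μH[1] (⋃ t ∈ X, edge K t))
    (x : ℝ) (hx : x ∈ Ioc a b) :
    vplus K x - vplus K a = ∫ t in Ioc a x, vvec t ∂σ := by
  obtain ⟨hxa, hxb⟩ := hx
  have hx2π : x ≤ a + 2*π := hxb.trans hb
  set Δtot : Pt := vplus K x - vplus K a with hΔtot
  set L := ‖(∫ t in Ioc a x, vvec t ∂σ) - Δtot‖ with hL
  set M := (σ (Ioc a x)).toReal with hM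
  set C : ℝ → ℝ := fun d => d + (1 - Real.cos d) + Real.tan d with hC
  have key : ∀ n : ℕ, 1 ≤ n → (x - a)/n < π/2 → L ≤ C ((x-a)/n) * M := by
    intro n hn1 hnδ
    set d := (x - a)/n with hd
    have hnn : (0:ℝ) < n := by exact_mod_cast hn1
    have hd0 : 0 < d := by rw [hd]; apply div_pos (by linarith) hnn
    set f : ℕ → ℝ := fun i => a + d * i with hf
    have hf0 : f 0 = a := by simp [hf]
    have hfn : f n = x := by
      simp only [hf, hd]
      field_simp
      ring
    have hstep : ∀ i : ℕ, f (i+1) - f i = d := by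
      intro i; simp only [hf]; push_cast; ring
    have hlt : ∀ i : ℕ, f i < f (i+1) := by
      intro i; have := hstep i; linarith
    have hmono : Monotone f := monotone_nat_of_le_succ (fun i => (hlt i).le)
    have hsub : ∀ i : ℕ, i < n → Ioc (f i) (f (i+1)) ⊆ Ioc a (a + 2*π) := by
      intro i hi
      apply Set.Ioc_subset_Ioc
      · rw [← hf0]; exact hmono (Nat.zero_le i)
      · calc f (i+1) ≤ f n := hmono hi
          _ = x := hfn
          _ ≤ a + 2*π := hx2π
    have hEq : ∀ i : ℕ, i < n →
        σ (Ioc (f i) (f (i+1))) = μH[1] (arcSet K (f i) (f (i+1))) := by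
      intro i hi
      exact hσ _ measurableSet_Ioc (hsub i hi)
    have hδi : ∀ i : ℕ, f (i+1) - f i < π/2 := by
      intro i; rw [hstep i]; exact hnδ
    have pieces : ∀ i : ℕ, i < n → σ (Ioc (f i) (f (i+1))) ≠ ⊤ ∧
        ‖(∫ t in Ioc (f i) (f (i+1)), vvec t ∂σ) - (vplus K (f (i+1)) - vplus K (f i))‖ ≤
          (σ (Ioc (f i) (f (i+1)))).toReal * C d := by
      intro i hi
      have h := piece_est hK (hlt i) (hδi i) σ (hEq i hi)
      refine ⟨h.1, ?_⟩
      have h2 := h.2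
      rw [hstep i] at h2
      exact h2
    have hdisj : (↑(Finset.range n) : Set ℕ).Pairwise
        (Function.onFun Disjoint fun i => Ioc (f i) (f (i+1))) := by
      intro i _ j _ hij
      rcases lt_or_gt_of_ne hij with h | h
      · simp only [Function.onFun]
        rw [Set.Ioc_disjoint_Ioc]
        calc min (f (i+1)) (f (j+1)) ≤ f (i+1) := min_le_left _ _
          _ ≤ f j := hmono h
          _ ≤ max (f i) (f j) := le_max_right _ _
      · simp only [Function.onFun]
        rw [Set.Ioc_disjoint_Ioc]
        calc min (f (i+1)) (f (j+1)) ≤ f (j+1) := min_le_right _ _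
          _ ≤ f i := hmono h
          _ ≤ max (f i) (f j) := le_max_left _ _
    have hIoc : Ioc a x = ⋃ i ∈ Finset.range n, Ioc (f i) (f (i+1)) := by
      rw [iUnion_Ioc_parts f hmono n, hf0, hfn]
    have hσsum : σ (Ioc a x) = ∑ i ∈ Finset.range n, σ (Ioc (f i) (f (i+1))) := by
      rw [hIoc]
      exact measure_biUnion_finset hdisj (fun i _ => measurableSet_Ioc)
    have hint : ∀ i : ℕ, i < n → IntegrableOn vvec (Ioc (f i) (f (i+1))) σ := by
      intro i hi
      apply Measure.integrableOn_of_bounded (M := 1) (pieces i hi).1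
        continuous_vvec.aestronglyMeasurable
      filter_upwards with t
      rw [norm_vvec]
    have hsplit : (∫ t in Ioc a x, vvec t ∂σ) =
        ∑ i ∈ Finset.range n, ∫ t in Ioc (f i) (f (i+1)), vvec t ∂σ := by
      rw [hIoc]
      exact MeasureTheory.integral_biUnion_finset _ (fun i _ => measurableSet_Ioc) hdisj
        (fun i hi => hint i (Finset.mem_range.mp hi))
    have htel : ∑ i ∈ Finset.range n, (vplus K (f (i+1)) - vplus K (f i)) = Δtot := by
      rw [Finset.sum_range_sub (fun i => vplus K (f i)), hf0, hfn]
    have hMsum : M = ∑ i ∈ Finset.range n, (σ (Ioc (f i) (f (i+1)))).toReal := by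
      rw [hM, hσsum]
      exact ENNReal.toReal_sum (fun i hi => (pieces i (Finset.mem_range.mp hi)).1)
    have hdiff : (∫ t in Ioc a x, vvec t ∂σ) - Δtot =
        ∑ i ∈ Finset.range n, ((∫ t in Ioc (f i) (f (i+1)), vvec t ∂σ) -
          (vplus K (f (i+1)) - vplus K (f i))) := by
      rw [hsplit, ← htel, ← Finset.sum_sub_distrib]
    calc L = ‖∑ i ∈ Finset.range n, ((∫ t in Ioc (f i) (f (i+1)), vvec t ∂σ) -
          (vplus K (f (i+1)) - vplus K (f i)))‖ := by rw [hL, hdiff]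
      _ ≤ ∑ i ∈ Finset.range n, ‖(∫ t in Ioc (f i) (f (i+1)), vvec t ∂σ) -
          (vplus K (f (i+1)) - vplus K (f i))‖ := norm_sum_le _ _
      _ ≤ ∑ i ∈ Finset.range n, (σ (Ioc (f i) (f (i+1)))).toReal * C d :=
          Finset.sum_le_sum (fun i hi => (pieces i (Finset.mem_range.mp hi)).2)
      _ = (∑ i ∈ Finset.range n, (σ (Ioc (f i) (f (i+1)))).toReal) * C d := by
          rw [Finset.sum_mul]
      _ = C d * M := by rw [← hMsum]; ring
  -- limit as n → ∞
  have h1 : Tendsto (fun n : ℕ => (x - a)/n) atTop (𝓝 0) :=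
    tendsto_const_div_atTop_nhds_zero_nat (x - a)
  have hCc : ContinuousAt C 0 := by
    apply ContinuousAt.add
    · apply ContinuousAt.add continuousAt_id
      exact (continuousAt_const.sub Real.continuous_cos.continuousAt)
    · exact Real.continuousAt_tan.mpr (by rw [Real.cos_zero]; norm_num)
  have hC0 : C 0 = 0 := by simp [hC]
  have hCt : Tendsto (fun n : ℕ => C ((x-a)/n) * M) atTop (𝓝 0) := by
    have := (hCc.tendsto.comp h1).mul_const M
    rwa [hC0, zero_mul] at this
  have hev : ∀ᶠ n : ℕ in atTop, L ≤ C ((x-a)/n) * M := by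
    have hπ2 : (0:ℝ) < π/2 := by positivity
    filter_upwards [eventually_ge_atTop (1:ℕ), h1.eventually (gt_mem_nhds hπ2)] with n h1n h2n
    exact key n h1n h2n
  have hL0 : L ≤ 0 := ge_of_tendsto hCt hev
  have hzero : (∫ t in Ioc a x, vvec t ∂σ) - Δtot = 0 :=
    norm_le_zero_iff.mp hL0
  rw [hΔtot] at hzero
  exact (sub_eq_zero.mp hzero).symm
end
end

section
/- Let K be a cap with rotation angle π/2. Then for every t ∈ [0, π/2), the right derivatives of the outer corner y_K and inner corner x_K exist and equal ∂⁺y_K(t) = −f_K^+(t)·u_t + g_K^+(t)·v_t and ∂⁺x_K(t) = −(f_K^+(t) − 1)·u_t + (g_K^+(t) − 1)·v_t; and for every t ∈ (0, π/2], the left derivatives exist and equal ∂⁻y_K(t) = −f_K^−(t)·u_t + g_K^−(t)·v_t and ∂⁻x_K(t) = −(f_K^−(t) − 1)·u_t + (g_K^−(t) − 1)·v_t. -/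
noncomputable section

open Real MeasureTheory Set Filter Topology

namespace CapAux13

lemma mk2_zero (x y : ℝ) : mk2 x y 0 = x := rfl
lemma mk2_one (x y : ℝ) : mk2 x y 1 = y := rfl

lemma pt_add_apply (p q : Pt) (i : Fin 2) : (p + q) i = p i + q i := rfl
lemma pt_sub_apply (p q : Pt) (i : Fin 2) : (p - q) i = p i - q i := rfl
lemma pt_neg_apply (p : Pt) (i : Fin 2) : (-p) i = -(p i) := rfl
lemma pt_smul_apply (a : ℝ) (p : Pt) (i : Fin 2) : (a • p) i = a * p i := rfl

lemma dotp_add_left (p q r : Pt) : dotp (p + q) r = dotp p r + dotp q r := by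
  simp [dotp, pt_add_apply]; ring
lemma dotp_sub_left (p q r : Pt) : dotp (p - q) r = dotp p r - dotp q r := by
  simp [dotp, pt_sub_apply]; ring
lemma dotp_smul_left (a : ℝ) (p r : Pt) : dotp (a • p) r = a * dotp p r := by
  simp [dotp, pt_smul_apply]; ring
lemma dotp_neg_right (p r : Pt) : dotp p (-r) = -dotp p r := by
  simp [dotp, pt_neg_apply]; ring

lemma uvec_dot_uvec (t : ℝ) : dotp (uvec t) (uvec t) = 1 := by
  simp [dotp, uvec, mk2_zero, mk2_one]; rw [← Real.sin_sq_add_cos_sq t]; ring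
lemma vvec_dot_vvec (t : ℝ) : dotp (vvec t) (vvec t) = 1 := by
  simp [dotp, vvec, mk2_zero, mk2_one]; rw [← Real.sin_sq_add_cos_sq t]; ring
lemma uvec_dot_vvec (t : ℝ) : dotp (uvec t) (vvec t) = 0 := by
  simp [dotp, uvec, vvec, mk2_zero, mk2_one]; ring
lemma vvec_dot_uvec (t : ℝ) : dotp (vvec t) (uvec t) = 0 := by
  simp [dotp, uvec, vvec, mk2_zero, mk2_one]; ring

lemma uvec_pi2 (t : ℝ) : uvec (t + π/2) = vvec t := by
  ext i
  fin_cases i <;>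
    simp [uvec, vvec, mk2, Real.cos_add_pi_div_two, Real.sin_add_pi_div_two]

lemma vvec_pi2 (t : ℝ) : vvec (t + π/2) = -uvec t := by
  ext i
  fin_cases i <;>
    simp [uvec, vvec, mk2, pt_neg_apply, Real.cos_add_pi_div_two,
      Real.sin_add_pi_div_two]

lemma hasDerivAt_uvec (t : ℝ) : HasDerivAt uvec (vvec t) t := by
  have h : HasDerivAt (fun s => (![Real.cos s, Real.sin s] : Fin 2 → ℝ))
      ![-Real.sin t, Real.cos t] t := by
    rw [hasDerivAt_pi]
    intro i
    fin_cases i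
    · simpa using Real.hasDerivAt_cos t
    · simpa using Real.hasDerivAt_sin t
  have := ((PiLp.continuousLinearEquiv 2 ℝ (fun _ : Fin 2 => ℝ)).symm.toContinuousLinearMap.hasFDerivAt).comp_hasDerivAt t h
  exact this

lemma hasDerivAt_vvec (t : ℝ) : HasDerivAt vvec (-uvec t) t := by
  have h : HasDerivAt (fun s => (![-Real.sin s, Real.cos s] : Fin 2 → ℝ))
      ![-Real.cos t, -Real.sin t] t := by
    rw [hasDerivAt_pi]
    intro i
    fin_cases i
    · simp; exact (Real.hasDerivAt_sin t).neg
    · simpa using Real.hasDerivAt_cos t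
  have := ((PiLp.continuousLinearEquiv 2 ℝ (fun _ : Fin 2 => ℝ)).symm.toContinuousLinearMap.hasFDerivAt).comp_hasDerivAt t h
  refine this.congr_deriv ?_
  ext i
  fin_cases i <;> simp [uvec, mk2, pt_neg_apply]



lemma continuous_dotp (q : Pt) : Continuous fun p : Pt => dotp p q := by
  unfold dotp
  exact (((EuclideanSpace.proj (0 : Fin 2)).continuous).mul continuous_const).add
    (((EuclideanSpace.proj (1 : Fin 2)).continuous).mul continuous_const)

variable {K : Set Pt}

lemma le_suppFn (hcK : IsCompact K) {p : Pt} (hp : p ∈ K) (x : ℝ) :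
    dotp p (uvec x) ≤ suppFn K x :=
  le_csSup ((hcK.image (continuous_dotp _)).bddAbove) ⟨p, hp, rfl⟩

lemma exists_suppFn (hne : K.Nonempty) (hcK : IsCompact K) (x : ℝ) :
    ∃ p ∈ K, dotp p (uvec x) = suppFn K x := by
  have := (hcK.image (continuous_dotp (uvec x))).sSup_mem (hne.image _)
  obtain ⟨p, hp, hpe⟩ := this
  exact ⟨p, hp, hpe⟩

lemma edge_nonempty (hne : K.Nonempty) (hcK : IsCompact K) (x : ℝ) :
    (edge K x).Nonempty := by
  obtain ⟨p, hp, hpe⟩ := exists_suppFn hne hcK x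
  exact ⟨p, hp, hpe⟩

lemma edge_isCompact (hcK : IsCompact K) (x : ℝ) : IsCompact (edge K x) :=
  hcK.inter_right (isClosed_eq (continuous_dotp _) continuous_const)

lemma dotp_uvec_param {σ : ℝ} (hσ : σ = 1 ∨ σ = -1) (t s : ℝ) (p : Pt) :
    dotp p (uvec (t + σ * s)) =
      Real.cos s * dotp p (uvec t) + Real.sin s * (σ * dotp p (vvec t)) := by
  rcases hσ with rfl | rfl
  · rw [show t + 1 * s = t + s by ring]
    simp only [dotp, uvec, vvec, mk2_zero, mk2_one, Real.cos_add, Real.sin_add]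
    ring
  · rw [show t + -1 * s = t - s by ring]
    simp only [dotp, uvec, vvec, mk2_zero, mk2_one, Real.cos_sub, Real.sin_sub]
    ring

lemma core (hne : K.Nonempty) (hcK : IsCompact K) (t σ : ℝ) (hσ : σ = 1 ∨ σ = -1) :
    Tendsto (fun s => (suppFn K (t + σ * s) - suppFn K t) / s) (𝓝[>] (0:ℝ))
      (𝓝 (sSup ((fun p => σ * dotp p (vvec t)) '' edge K t))) := by
  set g : Pt → ℝ := fun p => σ * dotp p (vvec t) with hg
  have hgc : Continuous g := continuous_const.mul (continuous_dotp _)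
  set S := sSup (g '' edge K t) with hS
  set M := sSup (g '' K) with hM
  have hE : (edge K t).Nonempty := edge_nonempty hne hcK t
  have hEc : IsCompact (edge K t) := edge_isCompact hcK t
  obtain ⟨phat, hphatE, hphatS⟩ : ∃ p ∈ edge K t, g p = S := by
    have := (hEc.image hgc).sSup_mem (hE.image _)
    obtain ⟨p, hp, hpe⟩ := this; exact ⟨p, hp, hpe⟩
  have hSle : ∀ p ∈ edge K t, g p ≤ S := fun p hp =>
    le_csSup ((hEc.image hgc).bddAbove) ⟨p, hp, rfl⟩
  have hMle : ∀ p ∈ K, g p ≤ M := fun p hp =>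
    le_csSup ((hcK.image hgc).bddAbove) ⟨p, hp, rfl⟩
  -- Bound A
  have hA : ∀ s : ℝ, suppFn K t * Real.cos s + S * Real.sin s ≤ suppFn K (t + σ * s) := by
    intro s
    have h1 : dotp phat (uvec (t + σ * s)) =
        Real.cos s * suppFn K t + Real.sin s * S := by
      rw [dotp_uvec_param hσ, hphatE.2,
        show σ * dotp phat (vvec t) = g phat from rfl, hphatS]
    have := le_suppFn hcK hphatE.1 (t + σ * s)
    rw [h1] at this; linarith
  -- Bound B
  have hB : ∀ ε > (0:ℝ), ∃ δ > (0:ℝ), δ ≤ π/4 ∧ ∀ s ∈ Ioo (0:ℝ) δ,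
      suppFn K (t + σ * s) ≤ suppFn K t * Real.cos s + (S + ε) * Real.sin s := by
    intro ε hε
    have hpi4 : (0:ℝ) < π/4 := by positivity
    have main : ∀ δ0 > (0:ℝ), ∀ s ∈ Ioo (0:ℝ) (min (π/4) (δ0 / (2 * (|M - (S + ε)| + 1)))),
        (∀ p ∈ K, dotp p (uvec t) ≤ suppFn K t - δ0 ∨ g p ≤ S + ε) →
        suppFn K (t + σ * s) ≤ suppFn K t * Real.cos s + (S + ε) * Real.sin s := by
      intro δ0 hδ0 s hs halt
      set C := |M - (S + ε)| + 1 with hC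
      have hCpos : (0:ℝ) < C := by positivity
      have hs0 : 0 < s := hs.1
      have hs4 : s < π/4 := lt_of_lt_of_le hs.2 (min_le_left _ _)
      have hsC : s < δ0 / (2 * C) := lt_of_lt_of_le hs.2 (min_le_right _ _)
      have hsin0 : 0 < Real.sin s :=
        Real.sin_pos_of_pos_of_lt_pi hs0 (by linarith [Real.pi_gt_three])
      have hcos2 : (1:ℝ)/2 ≤ Real.cos s := by
        have h1 : Real.cos (π/4) ≤ Real.cos s :=
          Real.cos_le_cos_of_nonneg_of_le_pi hs0.le (by linarith [Real.pi_gt_three]) hs4.le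
        rw [Real.cos_pi_div_four] at h1
        nlinarith [Real.sq_sqrt (by norm_num : (2:ℝ) ≥ 0), Real.sqrt_nonneg 2]
      have key : (M - (S + ε)) * Real.sin s ≤ δ0 * Real.cos s := by
        have h1 : (M - (S + ε)) * Real.sin s ≤ C * Real.sin s := by
          apply mul_le_mul_of_nonneg_right _ hsin0.le
          have h2 := le_abs_self (M - (S + ε)); linarith
        have h2 : C * Real.sin s ≤ C * s :=
          mul_le_mul_of_nonneg_left (Real.sin_le hs0.le) hCpos.le
        have h3 : C * s ≤ δ0 / 2 := by
          rw [div_mul_eq_div_div] at hsC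
          have := (lt_div_iff₀ hCpos).mp hsC
          linarith
        nlinarith
      show sSup ((fun p => dotp p (uvec (t + σ * s))) '' K) ≤ _
      apply csSup_le (hne.image _)
      intro x hx
      obtain ⟨p, hp, rfl⟩ := hx
      show dotp p (uvec (t + σ * s)) ≤ _
      rw [dotp_uvec_param hσ]
      have hcos0 : (0:ℝ) ≤ Real.cos s := by linarith
      have hgdef : σ * dotp p (vvec t) = g p := rfl
      rw [hgdef]
      rcases halt p hp with hcase | hcase
      · have hgM := hMle p hp
        nlinarith
      · have hpu := le_suppFn hcK hp t
        nlinarith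
    set F := K ∩ {p | S + ε ≤ g p} with hF
    by_cases hFne : F.Nonempty
    · have hFc : IsCompact F := hcK.inter_right (isClosed_le continuous_const hgc)
      obtain ⟨q, hqF, hqc⟩ :
          ∃ p ∈ F, dotp p (uvec t) = sSup ((fun p => dotp p (uvec t)) '' F) := by
        have h := (hFc.image (continuous_dotp (uvec t))).sSup_mem
          (hFne.image (fun p => dotp p (uvec t)))
        obtain ⟨p, hp, hpe⟩ := h; exact ⟨p, hp, hpe⟩
      set c := sSup ((fun p => dotp p (uvec t)) '' F) with hc
      have hqle : c ≤ suppFn K t := hqc ▸ le_suppFn hcK hqF.1 t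
      have hcne : c ≠ suppFn K t := by
        intro heq
        have hqedge : q ∈ edge K t := ⟨hqF.1, hqc.trans heq⟩
        have h1 := hSle q hqedge
        have h2 : S + ε ≤ g q := hqF.2
        linarith
      have hclt : c < suppFn K t := lt_of_le_of_ne hqle hcne
      refine ⟨min (π/4) ((suppFn K t - c) / (2 * (|M - (S + ε)| + 1))), ?_,
        min_le_left _ _, ?_⟩
      · apply lt_min hpi4
        have : (0:ℝ) < suppFn K t - c := by linarith
        positivity
      · intro s hs
        apply main (suppFn K t - c) (by linarith) s hs
        intro p hp
        by_cases hpg : S + ε ≤ g p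
        · left
          have : dotp p (uvec t) ≤ c :=
            le_csSup ((hFc.image (continuous_dotp _)).bddAbove) ⟨p, ⟨hp, hpg⟩, rfl⟩
          linarith
        · right; linarith [not_le.mp hpg]
    · refine ⟨min (π/4) (1 / (2 * (|M - (S + ε)| + 1))), ?_, min_le_left _ _, ?_⟩
      · apply lt_min hpi4; positivity
      · intro s hs
        apply main 1 one_pos s hs
        intro p hp
        right
        by_contra hcon
        exact hFne ⟨p, hp, le_of_lt (not_le.mp hcon)⟩
  -- Tendsto
  rw [Metric.tendsto_nhds]
  intro ε hε
  obtain ⟨δ, hδpos, hδ4, hδB⟩ := hB (ε/2) (by linarith)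
  have hslope_cos : Tendsto (slope Real.cos 0) (𝓝[>] (0:ℝ)) (𝓝 0) := by
    have h := Real.hasDerivAt_cos 0
    rw [hasDerivAt_iff_tendsto_slope] at h
    simp only [Real.sin_zero, neg_zero] at h
    exact h.mono_left (nhdsWithin_mono _ (fun x hx => ne_of_gt hx))
  have hslope_sin : Tendsto (slope Real.sin 0) (𝓝[>] (0:ℝ)) (𝓝 1) := by
    have h := Real.hasDerivAt_sin 0
    rw [hasDerivAt_iff_tendsto_slope] at h
    simp only [Real.cos_zero] at h
    exact h.mono_left (nhdsWithin_mono _ (fun x hx => ne_of_gt hx))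
  have hL : Tendsto (fun s : ℝ => suppFn K t * slope Real.cos 0 s + S * slope Real.sin 0 s)
      (𝓝[>] (0:ℝ)) (𝓝 S) := by
    have := (hslope_cos.const_mul (suppFn K t)).add (hslope_sin.const_mul S)
    simpa using this
  have hU : Tendsto (fun s : ℝ =>
        suppFn K t * slope Real.cos 0 s + (S + ε/2) * slope Real.sin 0 s)
      (𝓝[>] (0:ℝ)) (𝓝 (S + ε/2)) := by
    have := (hslope_cos.const_mul (suppFn K t)).add (hslope_sin.const_mul (S + ε/2))
    simpa using this
  have hLev : ∀ᶠ s in 𝓝[>] (0:ℝ),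
      S - ε < suppFn K t * slope Real.cos 0 s + S * slope Real.sin 0 s :=
    hL.eventually (eventually_gt_nhds (by linarith))
  have hUev : ∀ᶠ s in 𝓝[>] (0:ℝ),
      suppFn K t * slope Real.cos 0 s + (S + ε/2) * slope Real.sin 0 s < S + ε :=
    hU.eventually (eventually_lt_nhds (by linarith))
  have hIoo : Ioo (0:ℝ) δ ∈ 𝓝[>] (0:ℝ) := Ioo_mem_nhdsGT_of_mem ⟨le_refl _, hδpos⟩
  filter_upwards [hLev, hUev, hIoo] with s hsL hsU hsδ
  have hs0 : 0 < s := hsδ.1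
  have hsc : slope Real.cos 0 s = (Real.cos s - 1) / s := by simp [slope_def_field]
  have hss : slope Real.sin 0 s = Real.sin s / s := by simp [slope_def_field]
  rw [hsc, hss] at hsL hsU
  have e1 : (suppFn K t * Real.cos s + S * Real.sin s - suppFn K t) / s =
      suppFn K t * ((Real.cos s - 1) / s) + S * (Real.sin s / s) := by
    field_simp; ring
  have e2 : (suppFn K t * Real.cos s + (S + ε/2) * Real.sin s - suppFn K t) / s =
      suppFn K t * ((Real.cos s - 1) / s) + (S + ε/2) * (Real.sin s / s) := by
    field_simp; ring
  have hlow : suppFn K t * ((Real.cos s - 1) / s) + S * (Real.sin s / s) ≤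
      (suppFn K (t + σ * s) - suppFn K t) / s := by
    rw [← e1]
    exact (div_le_div_iff_of_pos_right hs0).mpr (by linarith [hA s])
  have hupp : (suppFn K (t + σ * s) - suppFn K t) / s ≤
      suppFn K t * ((Real.cos s - 1) / s) + (S + ε/2) * (Real.sin s / s) := by
    rw [← e2]
    exact (div_le_div_iff_of_pos_right hs0).mpr (by linarith [hδB s hsδ])
  rw [Real.dist_eq, abs_lt]
  constructor <;> linarith

lemma suppFn_deriv_Ici (hne : K.Nonempty) (hcK : IsCompact K) (t : ℝ) :
    HasDerivWithinAt (suppFn K)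
      (sSup ((fun p => dotp p (vvec t)) '' edge K t)) (Ici t) t := by
  rw [hasDerivWithinAt_iff_tendsto_slope, Ici_sdiff_left]
  have hcore := core hne hcK t 1 (Or.inl rfl)
  simp only [one_mul] at hcore
  have hmap : Tendsto (fun x : ℝ => x - t) (𝓝[>] t) (𝓝[>] (0:ℝ)) := by
    rw [tendsto_nhdsWithin_iff]
    constructor
    · have h := (continuous_id.sub (continuous_const (y := t))).tendsto t
      simp only [Pi.sub_apply, id_eq, sub_self] at h
      exact h.mono_left nhdsWithin_le_nhds
    · filter_upwards [self_mem_nhdsWithin] with x hx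
      exact sub_pos.mpr (mem_Ioi.mp hx)
  have h2 := hcore.comp hmap
  have hfun : ((fun s => (suppFn K (t + s) - suppFn K t) / s) ∘
      fun x : ℝ => x - t) = slope (suppFn K) t := by
    funext x
    simp only [Function.comp_apply, slope_def_field]
    rw [show t + (x - t) = x by ring]
  rw [hfun] at h2
  exact h2

lemma suppFn_deriv_Iic (hne : K.Nonempty) (hcK : IsCompact K) (t : ℝ) :
    HasDerivWithinAt (suppFn K)
      (sInf ((fun p => dotp p (vvec t)) '' edge K t)) (Iic t) t := by
  rw [hasDerivWithinAt_iff_tendsto_slope, Iic_diff_right]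
  have hcore := core hne hcK t (-1) (Or.inr rfl)
  have hswap : sSup ((fun p => -1 * dotp p (vvec t)) '' edge K t) =
      -sInf ((fun p => dotp p (vvec t)) '' edge K t) := by
    rw [Real.sInf_def, neg_neg]
    congr 1
    ext y
    simp only [Set.mem_image, Set.mem_neg]
    constructor
    · rintro ⟨p, hp, h⟩; exact ⟨p, hp, by linarith⟩
    · rintro ⟨p, hp, h⟩; exact ⟨p, hp, by linarith⟩
  rw [hswap] at hcore
  have hmap : Tendsto (fun x : ℝ => t - x) (𝓝[<] t) (𝓝[>] (0:ℝ)) := by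
    rw [tendsto_nhdsWithin_iff]
    constructor
    · have h := (continuous_const (y := t) |>.sub continuous_id).tendsto t
      simp only [Pi.sub_apply, id_eq, sub_self] at h
      exact h.mono_left nhdsWithin_le_nhds
    · filter_upwards [self_mem_nhdsWithin] with x hx
      exact sub_pos.mpr (mem_Iio.mp hx)
  have h2 := (hcore.comp hmap).neg
  rw [neg_neg] at h2
  have hfun : (fun x : ℝ => -(((fun s => (suppFn K (t + -1 * s) - suppFn K t) / s) ∘
      fun x : ℝ => t - x) x)) = slope (suppFn K) t := by
    funext x
    simp only [Function.comp_apply, slope_def_field]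
    rw [show t + -1 * (t - x) = x by ring, show x - t = -(t - x) by ring, div_neg]
  rw [hfun] at h2
  exact h2

lemma inner_eq (K : Set Pt) :
    innerCorner K = fun x => outerCorner K x - (uvec x + vvec x) := by
  funext x
  show (suppFn K x - 1) • uvec x + (suppFn K (x + π/2) - 1) • vvec x =
    (suppFn K x • uvec x + suppFn K (x + π/2) • vvec x) - (uvec x + vvec x)
  module

lemma outer_assemble {s s' : Set ℝ} {t a b : ℝ}
    (ha : HasDerivWithinAt (suppFn K) a s t)
    (hb : HasDerivWithinAt (suppFn K) b s' (t + π/2))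
    (hmaps : MapsTo (fun x : ℝ => x + π/2) s s') :
    HasDerivWithinAt (outerCorner K)
      ((a - suppFn K (t + π/2)) • uvec t + (suppFn K t + b) • vvec t) s t := by
  have h1 : HasDerivWithinAt (fun x => suppFn K x • uvec x)
      (suppFn K t • vvec t + a • uvec t) s t :=
    ha.smul (hasDerivAt_uvec t).hasDerivWithinAt
  have hinner : HasDerivWithinAt (fun x : ℝ => x + π/2) 1 s t :=
    ((hasDerivAt_id t).add_const _).hasDerivWithinAt
  have h2 : HasDerivWithinAt (fun x => suppFn K (x + π/2)) b s t := by
    have h := hb.comp t hinner hmaps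
    exact h.congr_deriv (mul_one b)
  have h3 : HasDerivWithinAt (fun x => suppFn K (x + π/2) • vvec x)
      (suppFn K (t + π/2) • (-uvec t) + b • vvec t) s t :=
    h2.smul (hasDerivAt_vvec t).hasDerivWithinAt
  have h4 := h1.add h3
  have heq : outerCorner K = fun x => suppFn K x • uvec x + suppFn K (x + π/2) • vvec x := rfl
  rw [heq]
  refine h4.congr_deriv ?_
  module

lemma fplus_eq (K : Set Pt) (t : ℝ) :
    fplus K t = suppFn K (t + π/2) -
      sSup ((fun p => dotp p (vvec t)) '' edge K t) := by
  show dotp (suppFn K t • uvec t + suppFn K (t + π/2) • vvec t -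
    (suppFn K t • uvec t + sSup ((fun p => dotp p (vvec t)) '' edge K t) • vvec t))
    (vvec t) = _
  simp only [dotp_sub_left, dotp_add_left, dotp_smul_left, uvec_dot_vvec, vvec_dot_vvec]
  ring

lemma fminus_eq (K : Set Pt) (t : ℝ) :
    fminus K t = suppFn K (t + π/2) -
      sInf ((fun p => dotp p (vvec t)) '' edge K t) := by
  show dotp (suppFn K t • uvec t + suppFn K (t + π/2) • vvec t -
    (suppFn K t • uvec t + sInf ((fun p => dotp p (vvec t)) '' edge K t) • vvec t))
    (vvec t) = _
  simp only [dotp_sub_left, dotp_add_left, dotp_smul_left, uvec_dot_vvec, vvec_dot_vvec]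
  ring

lemma dotp_neg_left (p r : Pt) : dotp (-p) r = -dotp p r := by
  simp [dotp, pt_neg_apply]; ring

lemma gplus_eq (K : Set Pt) (t : ℝ) :
    gplus K t = suppFn K t +
      sSup ((fun p => dotp p (vvec (t + π/2))) '' edge K (t + π/2)) := by
  show dotp (suppFn K t • uvec t + suppFn K (t + π/2) • vvec t -
    (suppFn K (t + π/2) • uvec (t + π/2) +
      sSup ((fun p => dotp p (vvec (t + π/2))) '' edge K (t + π/2)) • vvec (t + π/2)))
    (uvec t) = _
  rw [uvec_pi2, vvec_pi2]
  simp only [dotp_sub_left, dotp_add_left, dotp_smul_left, smul_neg, dotp_neg_left,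
    uvec_dot_uvec, vvec_dot_uvec]
  ring

lemma gminus_eq (K : Set Pt) (t : ℝ) :
    gminus K t = suppFn K t +
      sInf ((fun p => dotp p (vvec (t + π/2))) '' edge K (t + π/2)) := by
  show dotp (suppFn K t • uvec t + suppFn K (t + π/2) • vvec t -
    (suppFn K (t + π/2) • uvec (t + π/2) +
      sInf ((fun p => dotp p (vvec (t + π/2))) '' edge K (t + π/2)) • vvec (t + π/2)))
    (uvec t) = _
  rw [uvec_pi2, vvec_pi2]
  simp only [dotp_sub_left, dotp_add_left, dotp_smul_left, smul_neg, dotp_neg_left,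
    uvec_dot_uvec, vvec_dot_uvec]
  ring

end CapAux13

open CapAux13

theorem stmt_13 (K : Set Pt) (hK : IsCap (π/2) K) :
    (∀ t ∈ Ico (0:ℝ) (π/2),
      HasDerivWithinAt (outerCorner K)
        ((-(fplus K t)) • uvec t + gplus K t • vvec t) (Ici t) t ∧
      HasDerivWithinAt (innerCorner K)
        ((-(fplus K t - 1)) • uvec t + (gplus K t - 1) • vvec t) (Ici t) t) ∧
    (∀ t ∈ Ioc (0:ℝ) (π/2),
      HasDerivWithinAt (outerCorner K)
        ((-(fminus K t)) • uvec t + gminus K t • vvec t) (Iic t) t ∧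
      HasDerivWithinAt (innerCorner K)
        ((-(fminus K t - 1)) • uvec t + (gminus K t - 1) • vvec t) (Iic t) t) := by
  obtain ⟨⟨hne, hcK, -⟩, -⟩ := hK
  constructor
  · intro t _
    have ha := suppFn_deriv_Ici hne hcK t
    have hb := suppFn_deriv_Ici hne hcK (t + π/2)
    have hmaps : MapsTo (fun x : ℝ => x + π/2) (Ici t) (Ici (t + π/2)) := by
      intro x hx
      simpa using add_le_add_right (mem_Ici.mp hx) (π/2)
    have hout' := outer_assemble ha hb hmaps
    have hout : HasDerivWithinAt (outerCorner K)
        ((-(fplus K t)) • uvec t + gplus K t • vvec t) (Ici t) t := by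
      convert hout' using 2
      · rw [fplus_eq]; ring
      · rw [gplus_eq]
    refine ⟨hout, ?_⟩
    have hin' : HasDerivWithinAt (innerCorner K)
        (((-(fplus K t)) • uvec t + gplus K t • vvec t) - (vvec t + -uvec t))
        (Ici t) t := by
      rw [inner_eq]
      exact hout.sub (((hasDerivAt_uvec t).add (hasDerivAt_vvec t)).hasDerivWithinAt)
    convert hin' using 1
    module
  · intro t _
    have ha := suppFn_deriv_Iic hne hcK t
    have hb := suppFn_deriv_Iic hne hcK (t + π/2)
    have hmaps : MapsTo (fun x : ℝ => x + π/2) (Iic t) (Iic (t + π/2)) := by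
      intro x hx
      simpa using add_le_add_right (mem_Iic.mp hx) (π/2)
    have hout' := outer_assemble ha hb hmaps
    have hout : HasDerivWithinAt (outerCorner K)
        ((-(fminus K t)) • uvec t + gminus K t • vvec t) (Iic t) t := by
      convert hout' using 2
      · rw [fminus_eq]; ring
      · rw [gminus_eq]
    refine ⟨hout, ?_⟩
    have hin' : HasDerivWithinAt (innerCorner K)
        (((-(fminus K t)) • uvec t + gminus K t • vvec t) - (vvec t + -uvec t))
        (Iic t) t := by
      rw [inner_eq]
      exact hout.sub (((hasDerivAt_uvec t).add (hasDerivAt_vvec t)).hasDerivWithinAt)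
    convert hin' using 1
    module
end
end
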